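/- Let N ≥ 2 be an integer, M = 4^{N+1}, and a_i = 2 − (3/4)^{i−1}. Consider the zero-size instance over colors {white, red, blue} consisting of phase 0, which is M white items, followed by phases i = 1, …, N, where phase i consists of a_i·M/2 red items, then (1 − a_i/2)·M blue items, then M white items (all counts are even positive integers). Then for every run of BaP and every 0 ≤ i ≤ N, after all items of phases 0 through i have been processed, BaP has exactly a_{i+1}·M pseudo-bins, all of color white. -/
import Mathlib


/-- The three colors used in the construction. -/
inductive Color3 : Type
  | white
  | red
  | blue
deriving DecidableEq

/-- The number of red items in phase `i` (for `1 ≤ i ≤ N`) of the adversarial zero-size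
instance: `a_i·M/2 = 4^(N+1) − 2·3^(i−1)·4^(N−i+1)`, where `M = 4^(N+1)` and
`a_i = 2 − (3/4)^(i−1)`. -/
def redCount (N i : ℕ) : ℕ := 4 ^ (N + 1) - 2 * 3 ^ (i - 1) * 4 ^ (N - i + 1)

/-- The color of item `t` (1-based) of the adversarial zero-size instance with parameter `N`:
phase `0` consists of `M = 4^(N+1)` white items, and phase `i` (for `1 ≤ i ≤ N`) consists of
`a_i·M/2` red items, then `(1 − a_i/2)·M` blue items, then `M` white items. -/
def advColor (N : ℕ) (t : ℕ) : Color3 :=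
  if t ≤ 4 ^ (N + 1) then Color3.white
  else
    let i := (t - 4 ^ (N + 1) - 1) / (2 * 4 ^ (N + 1)) + 1
    let r := (t - 4 ^ (N + 1) - 1) % (2 * 4 ^ (N + 1)) + 1
    if r ≤ redCount N i then Color3.red
    else if r ≤ 4 ^ (N + 1) then Color3.blue
    else Color3.white

/-- A run of the algorithm Balanced-Pseudo (BaP) on an instance of `n` items with colors
`color 1, …, color n`.  `assign t` is the (1-based) index of the pseudo-bin receiving item `t`,
`nbins t` is the number of pseudo-bins after items `1,…,t` have been processed, and
`bcolor t j` is the color of pseudo-bin `j` after items `1,…,t` have been processed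
(the color of the last item assigned to it).  When item `t` arrives, either all existing
pseudo-bins have color `color t` and a new pseudo-bin is opened, or item `t` is assigned to an
existing pseudo-bin whose color `g` differs from `color t` and is such that the number of
pseudo-bins of color `g` is maximal among colors different from `color t` (ties arbitrary). -/
structure BaPRun (n : ℕ) {γ : Type*} [DecidableEq γ] (color : ℕ → γ) where
  assign : ℕ → ℕ
  nbins : ℕ → ℕ
  bcolor : ℕ → ℕ → γ
  nbins_zero : nbins 0 = 0
  step : ∀ t, 1 ≤ t → t ≤ n →
    (assign t = nbins (t - 1) + 1 ∧ nbins t = nbins (t - 1) + 1 ∧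
      ∀ j, 1 ≤ j → j ≤ nbins (t - 1) → bcolor (t - 1) j = color t) ∨
    (1 ≤ assign t ∧ assign t ≤ nbins (t - 1) ∧ nbins t = nbins (t - 1) ∧
      bcolor (t - 1) (assign t) ≠ color t ∧
      ∀ g, g ≠ color t →
        ((Finset.Icc 1 (nbins (t - 1))).filter fun j => bcolor (t - 1) j = g).card ≤
          ((Finset.Icc 1 (nbins (t - 1))).filter fun j =>
            bcolor (t - 1) j = bcolor (t - 1) (assign t)).card)
  bcolor_step : ∀ t, 1 ≤ t → t ≤ n → ∀ j,
    bcolor t j = if j = assign t then color t else bcolor (t - 1) j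

/-- `R.Y m` is the index of the first item assigned to pseudo-bin `m`. -/
noncomputable def BaPRun.Y {n : ℕ} {γ : Type*} [DecidableEq γ] {c : ℕ → γ}
    (R : BaPRun n c) (m : ℕ) : ℕ :=
  sInf {t | 1 ≤ t ∧ t ≤ n ∧ R.assign t = m}

/-- The number of pseudo-bins of color `g` just after items `1,…,t` have been processed. -/
def BaPRun.binsOfColor {n : ℕ} {γ : Type*} [DecidableEq γ] {c : ℕ → γ}
    (R : BaPRun n c) (t : ℕ) (g : γ) : ℕ :=
  ((Finset.Icc 1 (R.nbins t)).filter fun j => R.bcolor t j = g).card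

namespace BaPAux

open Finset

variable {n : ℕ} {γ : Type*} [DecidableEq γ] {c : ℕ → γ}

lemma step_count (R : BaPRun n c) (t : ℕ) (ht1 : 1 ≤ t) (htn : t ≤ n) :
    (R.nbins t = R.nbins (t-1) + 1 ∧
      (∀ g, g ≠ c t → R.binsOfColor (t-1) g = 0) ∧
      (∀ g, R.binsOfColor t g = if g = c t then R.nbins (t-1) + 1 else 0)) ∨
    (∃ g0, g0 ≠ c t ∧ 1 ≤ R.binsOfColor (t-1) g0 ∧
      (∀ g, g ≠ c t → R.binsOfColor (t-1) g ≤ R.binsOfColor (t-1) g0) ∧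
      R.nbins t = R.nbins (t-1) ∧
      R.binsOfColor t (c t) = R.binsOfColor (t-1) (c t) + 1 ∧
      R.binsOfColor t g0 = R.binsOfColor (t-1) g0 - 1 ∧
      ∀ g, g ≠ c t → g ≠ g0 → R.binsOfColor t g = R.binsOfColor (t-1) g) := by
  have hcol : ∀ j, R.bcolor t j = if j = R.assign t then c t else R.bcolor (t-1) j :=
    R.bcolor_step t ht1 htn
  rcases R.step t ht1 htn with ⟨ha, hn, hall⟩ | ⟨ha1, ham, hn, hne, hmax⟩
  · left
    refine ⟨hn, ?_, ?_⟩
    · intro g hg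
      unfold BaPRun.binsOfColor
      rw [Finset.filter_false_of_mem, Finset.card_empty]
      intro j hj
      rw [Finset.mem_Icc] at hj
      rw [hall j hj.1 hj.2]
      exact fun h => hg h.symm
    · intro g
      unfold BaPRun.binsOfColor
      by_cases hg : g = c t
      · subst hg
        rw [if_pos rfl, Finset.filter_true_of_mem, hn, Nat.card_Icc]
        · omega
        · intro j hj
          rw [Finset.mem_Icc, hn] at hj
          rw [hcol]
          by_cases hja : j = R.assign t
          · simp [hja]
          · rw [if_neg hja]
            rw [ha] at hja
            exact hall j hj.1 (by omega)
      · rw [if_neg hg, Finset.filter_false_of_mem, Finset.card_empty]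
        intro j hj
        rw [Finset.mem_Icc, hn] at hj
        rw [hcol]
        by_cases hja : j = R.assign t
        · rw [if_pos hja]; exact fun h => hg h.symm
        · rw [if_neg hja]
          rw [ha] at hja
          rw [hall j hj.1 (by omega)]
          exact fun h => hg h.symm
  · right
    set a := R.assign t with hadef
    set g0 := R.bcolor (t-1) a with hg0def
    set m := R.nbins (t-1) with hmdef
    have hmemS : a ∈ Finset.Icc 1 m := Finset.mem_Icc.mpr ⟨ha1, ham⟩
    have hamem : a ∈ (Finset.Icc 1 m).filter fun j => R.bcolor (t-1) j = g0 :=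
      Finset.mem_filter.mpr ⟨hmemS, rfl⟩
    have hIcc : Finset.Icc 1 (R.nbins t) = Finset.Icc 1 m := by rw [hn]
    have hfilt : ∀ g, (Finset.Icc 1 (R.nbins t)).filter (fun j => R.bcolor t j = g)
        = (Finset.Icc 1 m).filter (fun j => (if j = a then c t else R.bcolor (t-1) j) = g) := by
      intro g
      rw [hIcc]
      apply Finset.filter_congr
      intro j _
      rw [hcol j]
  -- helpers for the three cases
    refine ⟨g0, hne, ?_, hmax, hn, ?_, ?_, ?_⟩
    · exact Finset.card_pos.mpr ⟨a, hamem⟩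
    · -- color c t gains one
      unfold BaPRun.binsOfColor
      rw [hfilt]
      have : (Finset.Icc 1 m).filter (fun j => (if j = a then c t else R.bcolor (t-1) j) = c t)
          = insert a ((Finset.Icc 1 m).filter fun j => R.bcolor (t-1) j = c t) := by
        ext j
        by_cases hja : j = a
        · subst hja
          simp [hmemS]
        · simp only [hja, Finset.mem_filter, Finset.mem_insert]
          tauto
      rw [this, Finset.card_insert_of_notMem]
      simp only [Finset.mem_filter]
      exact fun h => hne h.2
    · -- color g0 loses one
      unfold BaPRun.binsOfColor
      rw [hfilt]
      have : (Finset.Icc 1 m).filter (fun j => (if j = a then c t else R.bcolor (t-1) j) = g0)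
          = ((Finset.Icc 1 m).filter fun j => R.bcolor (t-1) j = g0).erase a := by
        ext j
        simp only [Finset.mem_filter, Finset.mem_erase]
        by_cases hja : j = a
        · subst hja
          rw [if_pos rfl]
          simp [Ne.symm hne]
        · rw [if_neg hja]
          tauto
      rw [this, Finset.card_erase_of_mem hamem]
    · -- other colors unchanged
      intro g hgc hgg0
      unfold BaPRun.binsOfColor
      rw [hfilt]
      congr 1
      ext j
      simp only [Finset.mem_filter]
      by_cases hja : j = a
      · subst hja
        rw [if_pos rfl]
        have h1 : ¬ c t = g := fun h => hgc h.symm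
        have h2 : ¬ R.bcolor (t-1) a = g := fun h => hgg0 (by rw [hg0def, h])
        simp [h1, h2]
      · rw [if_neg hja]

lemma color3_cases (g : Color3) : g = Color3.white ∨ g = Color3.red ∨ g = Color3.blue := by
  cases g <;> simp

/-- Count state: number of white/red/blue pseudo-bins after `t` items. -/
def CS {n : ℕ} {cc : ℕ → Color3} (R : BaPRun n cc) (t w r b : ℕ) : Prop :=
  R.binsOfColor t Color3.white = w ∧ R.binsOfColor t Color3.red = r ∧
  R.binsOfColor t Color3.blue = b ∧ R.nbins t = w + r + b

lemma CS_congr {n : ℕ} {cc : ℕ → Color3} {R : BaPRun n cc} {t w r b t' w' r' b' : ℕ}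
    (h : CS R t w r b) (ht : t = t') (hw : w = w') (hr : r = r') (hb : b = b') :
    CS R t' w' r' b' := ht ▸ hw ▸ hr ▸ hb ▸ h

variable {cc : ℕ → Color3}

lemma whites_open (R : BaPRun n cc) (t0 k w0 : ℕ) (hk : t0 + k ≤ n)
    (hcol : ∀ s, t0 < s → s ≤ t0 + k → cc s = Color3.white)
    (h0 : CS R t0 w0 0 0) : CS R (t0 + k) (w0 + k) 0 0 := by
  induction k with
  | zero => simpa using h0
  | succ k ih =>
    obtain ⟨hw, hr, hb, hnb⟩ := ih (by omega) (fun s h1 h2 => hcol s h1 (by omega))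
    have ht1 : 1 ≤ t0 + k + 1 := by omega
    have htn : t0 + k + 1 ≤ n := by omega
    have hpre : t0 + k + 1 - 1 = t0 + k := by omega
    have hct : cc (t0 + k + 1) = Color3.white := hcol _ (by omega) (by omega)
    rcases step_count R (t0 + k + 1) ht1 htn with ⟨hn, hz, hnew⟩ | ⟨g0, hg0, hge1, -, -, -, -, -⟩
    · rw [hpre] at hn hnew
      rw [hct] at hnew
      refine ⟨?_, ?_, ?_, ?_⟩
      · rw [show t0 + (k+1) = t0 + k + 1 from rfl, hnew, if_pos rfl, hnb]; omega
      · rw [show t0 + (k+1) = t0 + k + 1 from rfl, hnew]; simp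
      · rw [show t0 + (k+1) = t0 + k + 1 from rfl, hnew]; simp
      · rw [show t0 + (k+1) = t0 + k + 1 from rfl, hn, hnb]; omega
    · exfalso
      rw [hpre] at hge1
      rw [hct] at hg0
      rcases color3_cases g0 with h|h|h
      · exact hg0 h
      · rw [h, hr] at hge1; omega
      · rw [h, hb] at hge1; omega

lemma reds_absorb (R : BaPRun n cc) (t0 k w0 r0 : ℕ) (hk : t0 + k ≤ n) (hkw : k ≤ w0)
    (hcol : ∀ s, t0 < s → s ≤ t0 + k → cc s = Color3.red)
    (h0 : CS R t0 w0 r0 0) : CS R (t0 + k) (w0 - k) (r0 + k) 0 := by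
  induction k with
  | zero => simpa using h0
  | succ k ih =>
    obtain ⟨hw, hr, hb, hnb⟩ := ih (by omega) (by omega) (fun s h1 h2 => hcol s h1 (by omega))
    have ht1 : 1 ≤ t0 + k + 1 := by omega
    have htn : t0 + k + 1 ≤ n := by omega
    have hpre : t0 + k + 1 - 1 = t0 + k := by omega
    have hct : cc (t0 + k + 1) = Color3.red := hcol _ (by omega) (by omega)
    rcases step_count R (t0 + k + 1) ht1 htn with ⟨hn, hz, hnew⟩ | ⟨g0, hg0, hge1, hmax, hn, hc1, hc2, hc3⟩
    · exfalso
      rw [hpre, hct] at hz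
      have := hz Color3.white (by simp)
      rw [hw] at this
      omega
    · rw [hpre] at hge1 hmax hn hc1 hc2 hc3
      rw [hct] at hg0 hc1 hmax hc3
      have hg0w : g0 = Color3.white := by
        rcases color3_cases g0 with h|h|h
        · exact h
        · exact absurd h (by simpa using hg0)
        · exfalso; rw [h, hb] at hge1; omega
      subst hg0w
      refine ⟨?_, ?_, ?_, ?_⟩
      · rw [show t0 + (k+1) = t0 + k + 1 from rfl, hc2, hw]; omega
      · rw [show t0 + (k+1) = t0 + k + 1 from rfl, hc1, hr]; omega
      · rw [show t0 + (k+1) = t0 + k + 1 from rfl, hc3 Color3.blue (by simp) (by simp), hb]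
      · rw [show t0 + (k+1) = t0 + k + 1 from rfl, hn, hnb]; omega

lemma blues_balance (R : BaPRun n cc) (t0 k m b0 : ℕ) (hk : t0 + k ≤ n) (hkm : k ≤ 2*m)
    (hcol : ∀ s, t0 < s → s ≤ t0 + k → cc s = Color3.blue)
    (h0 : CS R t0 m m b0) :
    ∃ w r, CS R (t0 + k) w r (b0 + k) ∧ w + r + k = 2*m ∧ 2*w + k ≤ 2*m + 1 ∧ 2*r + k ≤ 2*m + 1 := by
  induction k with
  | zero =>
    exact ⟨m, m, by simpa using h0, by omega, by omega, by omega⟩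
  | succ k ih =>
    obtain ⟨w, r, ⟨hw, hr, hb, hnb⟩, hsum, hbw, hbr⟩ :=
      ih (by omega) (by omega) (fun s h1 h2 => hcol s h1 (by omega))
    have ht1 : 1 ≤ t0 + k + 1 := by omega
    have htn : t0 + k + 1 ≤ n := by omega
    have hpre : t0 + k + 1 - 1 = t0 + k := by omega
    have hct : cc (t0 + k + 1) = Color3.blue := hcol _ (by omega) (by omega)
    rcases step_count R (t0 + k + 1) ht1 htn with ⟨hn, hz, hnew⟩ | ⟨g0, hg0, hge1, hmax, hn, hc1, hc2, hc3⟩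
    · exfalso
      rw [hpre, hct] at hz
      have h1 := hz Color3.white (by simp)
      have h2 := hz Color3.red (by simp)
      rw [hw] at h1; rw [hr] at h2
      omega
    · rw [hpre] at hge1 hmax hn hc1 hc2 hc3
      rw [hct] at hg0 hc1 hmax hc3
      rcases color3_cases g0 with h|h|h
      · subst h
        have hmr := hmax Color3.red (by simp)
        rw [hr, hw] at hmr
        rw [hw] at hge1
        refine ⟨w - 1, r, ⟨?_, ?_, ?_, ?_⟩, by omega, by omega, by omega⟩
        · rw [show t0 + (k+1) = t0 + k + 1 from rfl, hc2, hw]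
        · rw [show t0 + (k+1) = t0 + k + 1 from rfl, hc3 Color3.red (by simp) (by simp), hr]
        · rw [show t0 + (k+1) = t0 + k + 1 from rfl, hc1, hb]; omega
        · rw [show t0 + (k+1) = t0 + k + 1 from rfl, hn, hnb]; omega
      · subst h
        have hmw := hmax Color3.white (by simp)
        rw [hr, hw] at hmw
        rw [hr] at hge1
        refine ⟨w, r - 1, ⟨?_, ?_, ?_, ?_⟩, by omega, by omega, by omega⟩
        · rw [show t0 + (k+1) = t0 + k + 1 from rfl, hc3 Color3.white (by simp) (by simp), hw]
        · rw [show t0 + (k+1) = t0 + k + 1 from rfl, hc2, hr]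
        · rw [show t0 + (k+1) = t0 + k + 1 from rfl, hc1, hb]; omega
        · rw [show t0 + (k+1) = t0 + k + 1 from rfl, hn, hnb]; omega
      · exact absurd h (by simpa using hg0)

lemma whites_absorb (R : BaPRun n cc) (t0 k w0 r0 b0 : ℕ) (hk : t0 + k ≤ n) (hkrb : k ≤ r0 + b0)
    (hcol : ∀ s, t0 < s → s ≤ t0 + k → cc s = Color3.white)
    (h0 : CS R t0 w0 r0 b0) :
    ∃ r b, CS R (t0 + k) (w0 + k) r b ∧ r + b + k = r0 + b0 := by
  induction k with
  | zero =>
    exact ⟨r0, b0, by simpa using h0, by omega⟩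
  | succ k ih =>
    obtain ⟨r, b, ⟨hw, hr, hb, hnb⟩, hsum⟩ :=
      ih (by omega) (by omega) (fun s h1 h2 => hcol s h1 (by omega))
    have ht1 : 1 ≤ t0 + k + 1 := by omega
    have htn : t0 + k + 1 ≤ n := by omega
    have hpre : t0 + k + 1 - 1 = t0 + k := by omega
    have hct : cc (t0 + k + 1) = Color3.white := hcol _ (by omega) (by omega)
    rcases step_count R (t0 + k + 1) ht1 htn with ⟨hn, hz, hnew⟩ | ⟨g0, hg0, hge1, hmax, hn, hc1, hc2, hc3⟩
    · exfalso
      rw [hpre, hct] at hz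
      have h1 := hz Color3.red (by simp)
      have h2 := hz Color3.blue (by simp)
      rw [hr] at h1; rw [hb] at h2
      omega
    · rw [hpre] at hge1 hmax hn hc1 hc2 hc3
      rw [hct] at hg0 hc1 hmax hc3
      rcases color3_cases g0 with h|h|h
      · exact absurd h (by simpa using hg0)
      · subst h
        rw [hr] at hge1
        refine ⟨r - 1, b, ⟨?_, ?_, ?_, ?_⟩, by omega⟩
        · rw [show t0 + (k+1) = t0 + k + 1 from rfl, hc1, hw]; omega
        · rw [show t0 + (k+1) = t0 + k + 1 from rfl, hc2, hr]
        · rw [show t0 + (k+1) = t0 + k + 1 from rfl, hc3 Color3.blue (by simp) (by simp), hb]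
        · rw [show t0 + (k+1) = t0 + k + 1 from rfl, hn, hnb]; omega
      · subst h
        rw [hb] at hge1
        refine ⟨r, b - 1, ⟨?_, ?_, ?_, ?_⟩, by omega⟩
        · rw [show t0 + (k+1) = t0 + k + 1 from rfl, hc1, hw]; omega
        · rw [show t0 + (k+1) = t0 + k + 1 from rfl, hc3 Color3.red (by simp) (by simp), hr]
        · rw [show t0 + (k+1) = t0 + k + 1 from rfl, hc2, hb]
        · rw [show t0 + (k+1) = t0 + k + 1 from rfl, hn, hnb]; omega

lemma cs_all_white (R : BaPRun n cc) (t w : ℕ) (h : CS R t w 0 0) :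
    ∀ j, 1 ≤ j → j ≤ R.nbins t → R.bcolor t j = Color3.white := by
  intro j h1 h2
  rcases color3_cases (R.bcolor t j) with hg|hg|hg
  · exact hg
  · exfalso
    have hmem : j ∈ (Finset.Icc 1 (R.nbins t)).filter (fun j => R.bcolor t j = Color3.red) :=
      Finset.mem_filter.mpr ⟨Finset.mem_Icc.mpr ⟨h1, h2⟩, hg⟩
    have hpos := Finset.card_pos.mpr ⟨j, hmem⟩
    have h0 := h.2.1
    unfold BaPRun.binsOfColor at h0
    omega
  · exfalso
    have hmem : j ∈ (Finset.Icc 1 (R.nbins t)).filter (fun j => R.bcolor t j = Color3.blue) :=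
      Finset.mem_filter.mpr ⟨Finset.mem_Icc.mpr ⟨h1, h2⟩, hg⟩
    have hpos := Finset.card_pos.mpr ⟨j, hmem⟩
    have h0 := h.2.2.1
    unfold BaPRun.binsOfColor at h0
    omega

lemma advColor_early (N t : ℕ) (h2 : t ≤ 4^(N+1)) : advColor N t = Color3.white := by
  unfold advColor
  rw [if_pos h2]

lemma advColor_phase (N i r : ℕ) (hr1 : 1 ≤ r) (hr2 : r ≤ 2 * 4^(N+1)) :
    advColor N (4^(N+1) + 2*4^(N+1)*i + r) =
      if r ≤ redCount N (i+1) then Color3.red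
      else if r ≤ 4^(N+1) then Color3.blue else Color3.white := by
  have hM : 1 ≤ 4^(N+1) := Nat.one_le_pow _ _ (by norm_num)
  have h1 : 4^(N+1) + 2*4^(N+1)*i + r - 4^(N+1) - 1 = 2*4^(N+1)*i + (r-1) := by omega
  have hd : (2*4^(N+1)*i + (r-1)) / (2*4^(N+1)) = i := by
    rw [Nat.mul_add_div (by positivity), Nat.div_eq_of_lt (by omega)]; omega
  have hm : (2*4^(N+1)*i + (r-1)) % (2*4^(N+1)) = r - 1 := by
    rw [Nat.mul_add_mod, Nat.mod_eq_of_lt (by omega)]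
  have hr' : r - 1 + 1 = r := by omega
  unfold advColor
  rw [if_neg (by omega)]
  simp only [h1, hd, hm, hr']
lemma main_cs (N : ℕ) (R : BaPRun (4 ^ (N + 1) + 2 * 4 ^ (N + 1) * N) (advColor N)) :
    ∀ i, i ≤ N → CS R (4 ^ (N + 1) + 2 * 4 ^ (N + 1) * i)
      (2 * 4 ^ (N + 1) - 3 ^ i * 4 ^ (N + 1 - i)) 0 0 := by
  have hM1 : 1 ≤ 4^(N+1) := Nat.one_le_pow _ _ (by norm_num)
  intro i
  induction i with
  | zero =>
    intro _
    have h00 : CS R 0 0 0 0 := by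
      refine ⟨?_, ?_, ?_, ?_⟩ <;> simp [BaPRun.binsOfColor, R.nbins_zero]
    have h := whites_open R 0 (4^(N+1)) 0 (by omega)
      (fun s h1 h2 => advColor_early N s (by omega)) h00
    refine CS_congr h (by ring) ?_ rfl rfl
    simp only [pow_zero, Nat.sub_zero, one_mul]
    omega
  | succ i ih =>
    intro hi1
    have hprev := ih (by omega)
    have hstep : 2*4^(N+1)*(i+1) = 2*4^(N+1)*i + 2*4^(N+1) := by ring
    have hle : 2*4^(N+1)*(i+1) ≤ 2*4^(N+1)*N := Nat.mul_le_mul_left _ hi1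
    have h34 : 3^i ≤ 4^i := Nat.pow_le_pow_left (by norm_num) i
    have hvpos : 0 < 3^i * 4^(N-i) := by positivity
    have h4N : 4^i * 4^(N-i) = 4^N := by rw [← pow_add]; congr 1; omega
    have h4N1 : 4^(N+1) = 4 * 4^N := by rw [pow_succ]; ring
    have hvle : 3^i * 4^(N-i) ≤ 4^N := by
      calc 3^i * 4^(N-i) ≤ 4^i * 4^(N-i) := Nat.mul_le_mul_right _ h34
        _ = 4^N := h4N
    have h3v : 3 * (3^i * 4^(N-i)) < 4^(N+1) := by
      have h1 : 3^(i+1) < 4^(i+1) := Nat.pow_lt_pow_left (by norm_num) (by omega)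
      have h2 : 3^(i+1) * 4^(N-i) < 4^(i+1) * 4^(N-i) :=
        (Nat.mul_lt_mul_right (by positivity)).mpr h1
      have h3 : 4^(i+1) * 4^(N-i) = 4^(N+1) := by rw [← pow_add]; congr 1; omega
      have h4 : 3^(i+1) * 4^(N-i) = 3 * (3^i * 4^(N-i)) := by rw [pow_succ]; ring
      omega
    have hBv : 3^i * 4^(N+1-i) = 4 * (3^i * 4^(N-i)) := by
      rw [show N+1-i = (N-i)+1 from by omega, pow_succ]; ring
    have hBv1 : 3^(i+1) * 4^(N+1-(i+1)) = 3 * (3^i * 4^(N-i)) := by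
      rw [show N+1-(i+1) = N-i from by omega, pow_succ]; ring
    have hrc : redCount N (i+1) = 4^(N+1) - 2 * (3^i * 4^(N-i)) := by
      unfold redCount
      rw [show i+1-1 = i from by omega, show N-(i+1)+1 = N-i from by omega]
      have h5 : 2 * 3^i * 4^(N-i) = 2 * (3^i * 4^(N-i)) := by ring
      rw [h5]
    -- Block 1: red items
    have hcolred : ∀ s, 4^(N+1) + 2*4^(N+1)*i < s →
        s ≤ 4^(N+1) + 2*4^(N+1)*i + (4^(N+1) - 2*(3^i*4^(N-i))) → advColor N s = Color3.red := by
      intro s hs1 hs2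
      rw [show s = 4^(N+1) + 2*4^(N+1)*i + (s - (4^(N+1) + 2*4^(N+1)*i)) from by omega,
        advColor_phase N i _ (by omega) (by omega), if_pos (by omega)]
    have hprev' : CS R (4^(N+1) + 2*4^(N+1)*i) (2*4^(N+1) - 4*(3^i*4^(N-i))) 0 0 :=
      CS_congr hprev rfl (by omega) rfl rfl
    have h1 := reds_absorb R (4^(N+1) + 2*4^(N+1)*i) (4^(N+1) - 2*(3^i*4^(N-i)))
      (2*4^(N+1) - 4*(3^i*4^(N-i))) 0 (by omega) (by omega) hcolred hprev'
    have h1' : CS R (4^(N+1) + 2*4^(N+1)*i + (4^(N+1) - 2*(3^i*4^(N-i))))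
        (4^(N+1) - 2*(3^i*4^(N-i))) (4^(N+1) - 2*(3^i*4^(N-i))) 0 :=
      CS_congr h1 rfl (by omega) (by omega) rfl
    -- Block 2: blue items
    have hcolblue : ∀ s, 4^(N+1) + 2*4^(N+1)*i + (4^(N+1) - 2*(3^i*4^(N-i))) < s →
        s ≤ 4^(N+1) + 2*4^(N+1)*i + (4^(N+1) - 2*(3^i*4^(N-i))) + 2*(3^i*4^(N-i)) →
        advColor N s = Color3.blue := by
      intro s hs1 hs2
      rw [show s = 4^(N+1) + 2*4^(N+1)*i + (s - (4^(N+1) + 2*4^(N+1)*i)) from by omega,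
        advColor_phase N i _ (by omega) (by omega), if_neg (by omega), if_pos (by omega)]
    have h2 := blues_balance R (4^(N+1) + 2*4^(N+1)*i + (4^(N+1) - 2*(3^i*4^(N-i))))
      (2*(3^i*4^(N-i))) (4^(N+1) - 2*(3^i*4^(N-i))) 0 (by omega) (by omega) hcolblue h1'
    obtain ⟨w, r, hcs2, hsum2, hw2, hr2⟩ := h2
    have hw' : w = 4^(N+1) - 3*(3^i*4^(N-i)) := by omega
    have hr' : r = 4^(N+1) - 3*(3^i*4^(N-i)) := by omega
    subst hw' hr'
    -- Blocks 3 and 4: white items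
    have hcolwhite : ∀ s, 4^(N+1) + 2*4^(N+1)*i + 4^(N+1) < s →
        s ≤ 4^(N+1) + 2*4^(N+1)*i + 2*4^(N+1) → advColor N s = Color3.white := by
      intro s hs1 hs2
      rw [show s = 4^(N+1) + 2*4^(N+1)*i + (s - (4^(N+1) + 2*4^(N+1)*i)) from by omega,
        advColor_phase N i _ (by omega) (by omega), if_neg (by omega), if_neg (by omega)]
    have h3 := whites_absorb R
      (4^(N+1) + 2*4^(N+1)*i + (4^(N+1) - 2*(3^i*4^(N-i))) + 2*(3^i*4^(N-i)))
      (4^(N+1) - (3^i*4^(N-i))) (4^(N+1) - 3*(3^i*4^(N-i))) (4^(N+1) - 3*(3^i*4^(N-i)))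
      (0 + 2*(3^i*4^(N-i)))
      (by omega) (by omega) (fun s hs1 hs2 => hcolwhite s (by omega) (by omega)) hcs2
    obtain ⟨r3, b3, hcs3, hsum3⟩ := h3
    have hr3 : r3 = 0 := by omega
    have hb3 : b3 = 0 := by omega
    subst hr3 hb3
    have h4 := whites_open R
      (4^(N+1) + 2*4^(N+1)*i + (4^(N+1) - 2*(3^i*4^(N-i))) + 2*(3^i*4^(N-i)) + (4^(N+1) - (3^i*4^(N-i))))
      (3^i*4^(N-i))
      ((4^(N+1) - 3*(3^i*4^(N-i))) + (4^(N+1) - (3^i*4^(N-i))))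
      (by omega) (fun s hs1 hs2 => hcolwhite s (by omega) (by omega)) hcs3
    exact CS_congr h4 (by omega) (by omega) rfl rfl

end BaPAux

/-- let `N ≥ 2`, `M = 4^(N+1)`.  On the adversarial zero-size instance of
`M + 2·M·N` items described by `advColor N`, every run of BaP has, after all items of phases
`0,…,i` (that is, the first `M + 2·M·i` items) have been processed, exactly
`a_{i+1}·M = 2·4^(N+1) − 3^i·4^(N+1−i)` pseudo-bins, all of color white. -/
theorem bap_adversary_all_white (N : ℕ) (hN : 2 ≤ N)
    (R : BaPRun (4 ^ (N + 1) + 2 * 4 ^ (N + 1) * N) (advColor N))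
    (i : ℕ) (hi : i ≤ N) :
    R.nbins (4 ^ (N + 1) + 2 * 4 ^ (N + 1) * i) = 2 * 4 ^ (N + 1) - 3 ^ i * 4 ^ (N + 1 - i) ∧
    ∀ j, 1 ≤ j → j ≤ R.nbins (4 ^ (N + 1) + 2 * 4 ^ (N + 1) * i) →
      R.bcolor (4 ^ (N + 1) + 2 * 4 ^ (N + 1) * i) j = Color3.white := by
  obtain ⟨hw, hr, hb, hnb⟩ := BaPAux.main_cs N R i hi
  exact ⟨by omega, BaPAux.cs_all_white R _ _ ⟨hw, hr, hb, hnb⟩⟩
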